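/- arXiv:2408.14616 — 2 statements merged into one kernel-verified Lean document; each statement's English description precedes it below -/
import Mathlib

section
/- Let Φ : B(α₀, r) ⊆ ℝ^n → ℝ^N be a C²-function and β, γ > 0 constants such that (1) ⟨DΦ(α₀)ᵀ DΦ(α₀) v, v⟩ ≥ β‖v‖² for all v ∈ ℝ^n, and (2) ‖D²Φ(α)‖ ≤ γ for all α ∈ B(α₀, r). Then for r_{β,γ} = min{ r, √β/(6γ) } and all x, y ∈ B(α₀, r_{β,γ}), one has ‖Φ(x) − Φ(y)‖ ≥ (√β/2)·‖x − y‖. -/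
open Metric
open scoped RealInnerProductSpace

/-
Write A = DΦ(α₀). Condition (1) says ‖A v‖² = ⟪AᵀA v, v⟫ ≥ β‖v‖², so A stretches every vector by at
least √β. The bound on D²Φ makes DΦ γ-Lipschitz, so on the ball of radius √β/(6γ) it stays within
√β/6 of A, and the mean value inequality gives ‖Φ x − Φ y − A (x − y)‖ ≤ (√β/6)‖x − y‖ there.
Hence ‖Φ x − Φ y‖ ≥ (√β − √β/6)‖x − y‖ ≥ (√β/2)‖x − y‖.
-/

section LowerBound

variable {E F : Type*} [NormedAddCommGroup E] [InnerProductSpace ℝ E] [CompleteSpace E]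
  [NormedAddCommGroup F] [InnerProductSpace ℝ F] [CompleteSpace F]

theorem ContinuousLinearMap.sqrt_mul_norm_le_norm_apply_of_le_inner_adjoint {A : E →L[ℝ] F}
    {β : ℝ} (hA : ∀ v, β * ‖v‖ ^ 2 ≤ ⟪A.adjoint (A v), v⟫) (v : E) :
    Real.sqrt β * ‖v‖ ≤ ‖A v‖ := by
  have hsq : β * ‖v‖ ^ 2 ≤ ‖A v‖ ^ 2 := by
    simpa only [ContinuousLinearMap.adjoint_inner_left, real_inner_self_eq_norm_sq] using hA v
  calc Real.sqrt β * ‖v‖ = Real.sqrt (β * ‖v‖ ^ 2) := by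
        rw [Real.sqrt_mul' _ (by positivity), Real.sqrt_sq (norm_nonneg v)]
    _ ≤ Real.sqrt (‖A v‖ ^ 2) := Real.sqrt_le_sqrt hsq
    _ = ‖A v‖ := Real.sqrt_sq (norm_nonneg _)

end LowerBound

section MeanValue

variable {E F : Type*} [NormedAddCommGroup E] [NormedSpace ℝ E]
  [NormedAddCommGroup F] [NormedSpace ℝ F]

theorem Convex.norm_fderiv_sub_le_of_norm_iteratedFDeriv_two_le {f : E → F} {s : Set E}
    (hs : Convex ℝ s) (hs_open : IsOpen s) (hf : ContDiffOn ℝ 2 f s) {γ : ℝ}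
    (hγ : ∀ z ∈ s, ‖iteratedFDeriv ℝ 2 f z‖ ≤ γ) {x y : E} (hx : x ∈ s) (hy : y ∈ s) :
    ‖fderiv ℝ f x - fderiv ℝ f y‖ ≤ γ * ‖x - y‖ := by
  have hf' : ContDiffOn ℝ 1 (fderiv ℝ f) s := hf.fderiv_of_isOpen hs_open (by norm_num)
  refine hs.norm_image_sub_le_of_norm_fderiv_le
    (fun z hz => (hf'.differentiableOn one_ne_zero).differentiableAt (hs_open.mem_nhds hz))
    (fun z hz => ?_) hy hx
  rw [← norm_iteratedFDeriv_one, norm_iteratedFDeriv_fderiv]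
  exact hγ z hz

theorem Convex.sub_mul_norm_sub_le_norm_image_sub {f : E → F} {s : Set E} (hs : Convex ℝ s)
    (hf : ∀ z ∈ s, DifferentiableAt ℝ f z) {A : E →L[ℝ] F} {c ε : ℝ}
    (hA : ∀ v, c * ‖v‖ ≤ ‖A v‖) (hfA : ∀ z ∈ s, ‖fderiv ℝ f z - A‖ ≤ ε)
    {x y : E} (hx : x ∈ s) (hy : y ∈ s) :
    (c - ε) * ‖x - y‖ ≤ ‖f x - f y‖ := by
  have herr : ‖f x - f y - A (x - y)‖ ≤ ε * ‖x - y‖ :=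
    hs.norm_image_sub_le_of_norm_fderiv_le' hf hfA hy hx
  have htri : ‖A (x - y)‖ ≤ ‖f x - f y‖ + ‖f x - f y - A (x - y)‖ := by
    simpa using norm_sub_le (f x - f y) (f x - f y - A (x - y))
  linarith [hA (x - y)]

end MeanValue

theorem stmt_4_general (n N : ℕ) (α₀ : EuclideanSpace ℝ (Fin n)) (r β γ : ℝ)
    (hr : 0 < r) (hγ : 0 < γ)
    (Φ : EuclideanSpace ℝ (Fin n) → EuclideanSpace ℝ (Fin N))
    (hΦ : ContDiffOn ℝ 2 Φ (ball α₀ r))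
    (h1 : ∀ v : EuclideanSpace ℝ (Fin n),
      β * ‖v‖ ^ 2 ≤ ⟪(ContinuousLinearMap.adjoint (fderiv ℝ Φ α₀)) ((fderiv ℝ Φ α₀) v), v⟫)
    (h2 : ∀ α ∈ ball α₀ r, ‖iteratedFDeriv ℝ 2 Φ α‖ ≤ γ) :
    ∀ x ∈ ball α₀ (min r (Real.sqrt β / (6 * γ))),
      ∀ y ∈ ball α₀ (min r (Real.sqrt β / (6 * γ))),
        Real.sqrt β / 2 * ‖x - y‖ ≤ ‖Φ x - Φ y‖ := by
  intro x hx y hy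
  have hsub : ball α₀ (min r (Real.sqrt β / (6 * γ))) ⊆ ball α₀ r :=
    ball_subset_ball (min_le_left _ _)
  have hdiff : ∀ z ∈ ball α₀ (min r (Real.sqrt β / (6 * γ))), DifferentiableAt ℝ Φ z :=
    fun z hz => (hΦ.differentiableOn (by norm_num)).differentiableAt
      (isOpen_ball.mem_nhds (hsub hz))
  have hnear : ∀ z ∈ ball α₀ (min r (Real.sqrt β / (6 * γ))),
      ‖fderiv ℝ Φ z - fderiv ℝ Φ α₀‖ ≤ Real.sqrt β / 6 := by
    intro z hz
    have hz' : ‖z - α₀‖ * (6 * γ) < Real.sqrt β :=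
      (lt_div_iff₀ (by positivity)).mp ((mem_ball_iff_norm.mp hz).trans_le (min_le_right _ _))
    have := (convex_ball α₀ r).norm_fderiv_sub_le_of_norm_iteratedFDeriv_two_le isOpen_ball hΦ h2
      (hsub hz) (mem_ball_self hr)
    linarith
  have key := (convex_ball _ _).sub_mul_norm_sub_le_norm_image_sub hdiff
    (ContinuousLinearMap.sqrt_mul_norm_le_norm_apply_of_le_inner_adjoint h1) hnear hx hy
  nlinarith [Real.sqrt_nonneg β, norm_nonneg (x - y)]

/-- Quantitative lower bound: under the hypotheses of the injectivity lemma
(`⟨DΦ(α₀)ᵀ DΦ(α₀) v, v⟩ ≥ β ‖v‖²` and `‖D²Φ(α)‖ ≤ γ` on `B(α₀,r)`), for all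
`x, y ∈ B(α₀, min r (√β/(6γ)))` one has `‖Φ(x) − Φ(y)‖ ≥ (√β/2) ‖x − y‖`. -/
theorem stmt_4 (n N : ℕ) (α₀ : EuclideanSpace ℝ (Fin n)) (r β γ : ℝ)
    (hr : 0 < r) (hβ : 0 < β) (hγ : 0 < γ)
    (Φ : EuclideanSpace ℝ (Fin n) → EuclideanSpace ℝ (Fin N))
    (hΦ : ContDiffOn ℝ 2 Φ (ball α₀ r))
    (h1 : ∀ v : EuclideanSpace ℝ (Fin n),
      β * ‖v‖ ^ 2 ≤ ⟪(ContinuousLinearMap.adjoint (fderiv ℝ Φ α₀)) ((fderiv ℝ Φ α₀) v), v⟫)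
    (h2 : ∀ α ∈ ball α₀ r, ‖iteratedFDeriv ℝ 2 Φ α‖ ≤ γ) :
    ∀ x ∈ ball α₀ (min r (Real.sqrt β / (6 * γ))),
      ∀ y ∈ ball α₀ (min r (Real.sqrt β / (6 * γ))),
        Real.sqrt β / 2 * ‖x - y‖ ≤ ‖Φ x - Φ y‖ :=
  stmt_4_general n N α₀ r β γ hr hγ Φ hΦ h1 h2
end

section
/- Fix h > 0 and let α₀ be an n×n real matrix such that exp(h·α₀) has n pairwise distinct complex eigenvalues and such that all complex eigenvalues of α₀ are real. Then the equation exp(h·α) = exp(h·α₀) has a unique solution among real n×n matrices, namely α = α₀. -/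
/-!
Over `ℂ`, `A = exp (h • α₀)` has `n` distinct eigenvalues, so it is diagonalised by an invertible
`P`, and every matrix commuting with `A` is diagonalised by the same `P`. Both `α` and `α₀` commute
with `A`, so `P⁻¹ α P = diag b` and `P⁻¹ α₀ P = diag b₀` with `exp (h bᵢ) = μᵢ = exp (h b₀ᵢ)`,
where `μ` are the eigenvalues of `A`. The `b₀ᵢ` are real by hypothesis, hence so are the `μᵢ`.
Since `α` is real, `conj bᵢ` is again some `bⱼ`, and then `μⱼ = conj μᵢ = μᵢ` forces `j = i`: the
`bᵢ` are real too. The real exponential is injective, so `b = b₀` and `α = α₀`.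
-/

open Polynomial Function

namespace Matrix

variable {ι : Type*} [Fintype ι] [DecidableEq ι]

theorem eq_diagonal_of_commute_diagonal {R : Type*} [CommRing R] [NoZeroDivisors R]
    {d : ι → R} (hd : Injective d) {B : Matrix ι ι R} (hB : Commute B (diagonal d)) :
    B = diagonal fun i => B i i := by
  ext i j
  rcases eq_or_ne i j with rfl | hij
  · simp
  · have hBij : B i j * (d j - d i) = 0 := by
      have := congrFun (congrFun hB.eq i) j
      rw [mul_diagonal, diagonal_mul] at this
      linear_combination this
    rw [diagonal_apply_ne _ hij]
    exact (mul_eq_zero.1 hBij).resolve_right (sub_ne_zero.2 (hd.ne hij.symm))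

variable {K : Type*} [Field K]

theorem exists_inv_mul_mul_eq_diagonal_of_commute {P A B : Matrix ι ι K} (hP : IsUnit P)
    {μ : ι → K} (hμ : Injective μ) (hA : P⁻¹ * A * P = diagonal μ) (hB : Commute B A) :
    ∃ b, P⁻¹ * B * P = diagonal b := by
  refine ⟨_, eq_diagonal_of_commute_diagonal hμ ?_⟩
  rw [← hA, commute_iff_eq]
  simp only [mul_assoc, mul_nonsing_inv_cancel_left _ _ ((isUnit_iff_isUnit_det P).1 hP)]
  rw [← mul_assoc B, hB.eq, mul_assoc]

theorem charpoly_eq_prod_of_inv_mul_mul_eq_diagonal {P M : Matrix ι ι K} (hP : IsUnit P)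
    {b : ι → K} (hM : P⁻¹ * M * P = diagonal b) : M.charpoly = ∏ i, (X - C (b i)) := by
  obtain ⟨u, rfl⟩ := hP
  rw [← charpoly_units_conj' u M, hM, charpoly_diagonal]

theorem isRoot_charpoly_iff_of_inv_mul_mul_eq_diagonal {P M : Matrix ι ι K} (hP : IsUnit P)
    {b : ι → K} (hM : P⁻¹ * M * P = diagonal b) {z : K} :
    M.charpoly.IsRoot z ↔ ∃ i, b i = z := by
  rw [charpoly_eq_prod_of_inv_mul_mul_eq_diagonal hP hM, isRoot_prod]
  simp [sub_eq_zero, eq_comm]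

theorem exists_inv_mul_mul_eq_diagonal_of_card_roots [DecidableEq K] {A : Matrix ι ι K}
    (hA : A.charpoly.roots.toFinset.card = Fintype.card ι) :
    ∃ P : Matrix ι ι K, ∃ μ : ι → K, IsUnit P ∧ Injective μ ∧ P⁻¹ * A * P = diagonal μ := by
  obtain ⟨e⟩ : Nonempty (ι ≃ A.charpoly.roots.toFinset) :=
    ⟨Fintype.equivOfCardEq (by simp [hA])⟩
  set μ : ι → K := fun i => e i
  have hμ : Injective μ := fun i j hij => e.injective (Subtype.ext hij)
  have hev (i : ι) : Module.End.HasEigenvalue (toLin' A) (μ i) := by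
    rw [Module.End.hasEigenvalue_iff_isRoot_charpoly, charpoly_toLin']
    exact isRoot_of_mem_roots (Multiset.mem_toFinset.1 (e i).2)
  choose v hv using fun i => (hev i).exists_hasEigenvector
  set P : Matrix ι ι K := of fun i j => v j i
  have hP : IsUnit P :=
    linearIndependent_cols_iff_isUnit.1 (Module.End.eigenvectors_linearIndependent' _ μ hμ v hv)
  have hAP : A * P = P * diagonal μ := by
    ext i j
    simpa [P, mulVec, dotProduct, mul_apply, diagonal_apply, mul_comm (v j i)] using
      congrFun (hv j).apply_eq_smul i
  refine ⟨P, μ, hP, hμ, ?_⟩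
  rw [mul_assoc, hAP, ← mul_assoc, nonsing_inv_mul _ ((isUnit_iff_isUnit_det P).1 hP), one_mul]

section Exp

variable {𝕂 : Type*} [NormedField 𝕂] [NormedAlgebra ℚ 𝕂] [CompleteSpace 𝕂]

open NormedSpace

theorem inv_mul_exp_smul_mul_eq_diagonal {P B : Matrix ι ι 𝕂} (hP : IsUnit P) {b : ι → 𝕂}
    (hB : P⁻¹ * B * P = diagonal b) (t : 𝕂) :
    P⁻¹ * exp (t • B) * P = diagonal fun i => exp (t * b i) := by
  rw [← exp_conj' _ _ hP, mul_smul_comm, smul_mul_assoc, hB, ← diagonal_smul, exp_diagonal]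
  congr 1
  funext i
  simp [Pi.coe_exp]

theorem exists_inv_mul_mul_eq_diagonal_of_exp_smul {P B : Matrix ι ι 𝕂} (hP : IsUnit P)
    {μ : ι → 𝕂} (hμ : Injective μ) {t : 𝕂} (hexp : P⁻¹ * exp (t • B) * P = diagonal μ) :
    ∃ b, P⁻¹ * B * P = diagonal b ∧ ∀ i, exp (t * b i) = μ i := by
  obtain ⟨b, hb⟩ := exists_inv_mul_mul_eq_diagonal_of_commute hP hμ hexp
    ((Commute.refl B).smul_right t).exp_right
  refine ⟨b, hb, fun i => ?_⟩
  rw [inv_mul_exp_smul_mul_eq_diagonal hP hb] at hexp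
  exact congrFun (diagonal_injective hexp) i

end Exp

open scoped Norms.Operator in
theorem exp_map_ofReal (M : Matrix ι ι ℝ) :
    (NormedSpace.exp M).map Complex.ofReal = NormedSpace.exp (M.map Complex.ofReal) :=
  NormedSpace.map_exp Complex.ofRealHom.mapMatrix
    (continuous_id.matrix_map Complex.continuous_ofReal) M

open ComplexConjugate in
theorem conj_eq_self_of_inv_mul_mul_map_ofReal_eq_diagonal {P : Matrix ι ι ℂ}
    {M : Matrix ι ι ℝ} (hP : IsUnit P) {b : ι → ℂ}
    (hM : P⁻¹ * M.map Complex.ofReal * P = diagonal b) {g : ℂ → ℂ}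
    (hg : ∀ z, g (conj z) = conj (g z)) (hgb : Injective (g ∘ b))
    (hgb_real : ∀ i, conj (g (b i)) = g (b i)) (i : ι) : conj (b i) = b i := by
  have hroot : (M.map Complex.ofReal).charpoly.IsRoot (conj (b i)) := by
    have hbi := (isRoot_charpoly_iff_of_inv_mul_mul_eq_diagonal hP hM).2 ⟨i, rfl⟩
    have hchar : (M.map Complex.ofReal).charpoly = M.charpoly.map (algebraMap ℝ ℂ) :=
      charpoly_map M Complex.ofRealHom
    rw [hchar, IsRoot, eval_map_algebraMap] at hbi ⊢
    rw [aeval_conj, hbi, map_zero]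
  obtain ⟨j, hj⟩ := (isRoot_charpoly_iff_of_inv_mul_mul_eq_diagonal hP hM).1 hroot
  have hgj : g (b j) = g (b i) := by rw [hj, hg, hgb_real]
  obtain rfl : j = i := hgb hgj
  exact hj.symm

end Matrix

open ComplexConjugate in
theorem Complex.eq_of_exp_ofReal_mul_eq {t : ℝ} (ht : t ≠ 0) {z w : ℂ} (hz : conj z = z)
    (hw : conj w = w) (h : exp (t * z) = exp (t * w)) : z = w := by
  obtain ⟨x, rfl⟩ := conj_eq_iff_real.1 hz
  obtain ⟨y, rfl⟩ := conj_eq_iff_real.1 hw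
  rw [← ofReal_mul, ← ofReal_mul, ← ofReal_exp, ← ofReal_exp, ofReal_inj] at h
  rw [mul_left_cancel₀ ht (Real.exp_injective h)]

open Matrix NormedSpace ComplexConjugate in
/-- Fix `h > 0` and let `α₀` be a real `n×n` matrix such that `exp(h·α₀)` has `n`
pairwise distinct complex eigenvalues and all complex eigenvalues of `α₀` are real.
Then `α = α₀` is the unique real matrix solution of `exp(h·α) = exp(h·α₀)`. -/
theorem stmt_10 (h : ℝ) (hh : 0 < h) (n : ℕ) (α₀ : Matrix (Fin n) (Fin n) ℝ)
    (hdist : ((NormedSpace.exp (h • α₀)).map Complex.ofReal).charpoly.roots.toFinset.card = n)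
    (hreal : ∀ l : ℂ, (α₀.map Complex.ofReal).charpoly.IsRoot l → l.im = 0) :
    {α : Matrix (Fin n) (Fin n) ℝ |
      NormedSpace.exp (h • α) = NormedSpace.exp (h • α₀)} = {α₀} := by
  refine Set.eq_singleton_iff_unique_mem.2 ⟨rfl, fun α hα => ?_⟩
  have hexp (β : Matrix (Fin n) (Fin n) ℝ) (hβ : exp (h • β) = exp (h • α₀)) :
      (exp (h • α₀)).map Complex.ofReal = exp ((h : ℂ) • β.map Complex.ofReal) := by
    rw [← hβ, exp_map_ofReal, map_smul' _ _ _ Complex.ofReal_mul]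
  obtain ⟨P, μ, hP, hμ, hPA⟩ :=
    exists_inv_mul_mul_eq_diagonal_of_card_roots (by rwa [Fintype.card_fin])
  obtain ⟨b, hb, hbμ⟩ := exists_inv_mul_mul_eq_diagonal_of_exp_smul hP hμ (hexp α hα ▸ hPA)
  obtain ⟨b₀, hb₀, hb₀μ⟩ := exists_inv_mul_mul_eq_diagonal_of_exp_smul hP hμ (hexp α₀ rfl ▸ hPA)
  simp only [← Complex.exp_eq_exp_ℂ] at hbμ hb₀μ
  have hb₀_real (i : Fin n) : conj (b₀ i) = b₀ i := Complex.conj_eq_iff_im.2 <|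
    hreal _ ((isRoot_charpoly_iff_of_inv_mul_mul_eq_diagonal hP hb₀).2 ⟨i, rfl⟩)
  have hconj (z : ℂ) : Complex.exp (h * conj z) = conj (Complex.exp (h * z)) := by
    rw [← Complex.exp_conj, map_mul, Complex.conj_ofReal]
  have hb_real := conj_eq_self_of_inv_mul_mul_map_ofReal_eq_diagonal hP hb
    (g := fun z => Complex.exp (h * z)) hconj (by simpa only [comp_def, hbμ] using hμ)
    (fun i => by rw [hbμ, ← hb₀μ, ← hconj, hb₀_real])
  have hbb₀ : b = b₀ := funext fun i =>
    Complex.eq_of_exp_ofReal_mul_eq hh.ne' (hb_real i) (hb₀_real i) ((hbμ i).trans (hb₀μ i).symm)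
  rw [← hbb₀, ← hb] at hb₀
  exact map_injective Complex.ofReal_injective
    ((isUnit_nonsing_inv_iff.2 hP).mul_left_cancel (hP.mul_right_cancel hb₀)).symm
end
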